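/- As d → ∞, ∏_{i=2}^d U(2i) ∼ C′_e/√d, i.e., lim_{d→∞} √d · ∏_{i=2}^d U(2i) = C′_e, where C′_e = C_e = 4/(πC) and C = 2^{1/6}·e^{1/2}·π/A⁶. -/

import Mathlib

open Filter Finset Real

namespace Dimer

/-- The kernel `L(d) = Γ((d-1)/2)² Γ((d+1)/2)² / Γ(d/2)⁴`. -/
noncomputable def Lker (d : ℝ) : ℝ :=
  Real.Gamma ((d - 1) / 2) ^ 2 * Real.Gamma ((d + 1) / 2) ^ 2 / Real.Gamma (d / 2) ^ 4

/-- The kernel `U(d) = Γ((d-1)/2)² Γ((d+1)/2)² / (Γ(d/2-1) Γ(d/2)² Γ(d/2+1))`. -/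
noncomputable def Uker (d : ℝ) : ℝ :=
  Real.Gamma ((d - 1) / 2) ^ 2 * Real.Gamma ((d + 1) / 2) ^ 2 /
    (Real.Gamma (d / 2 - 1) * Real.Gamma (d / 2) ^ 2 * Real.Gamma (d / 2 + 1))

/-- The Pochhammer symbol `(a)_n = a(a+1)⋯(a+n-1)`. -/
noncomputable def poch (a : ℝ) (n : ℕ) : ℝ := ∏ j ∈ Finset.range n, (a + (j : ℝ))

/-- `A` is the Glaisher–Kinkelin constant:
`lim_{n→∞} (0!·1!⋯(n-1)!) · n^{-n²/2+1/12} · (2π)^{-n/2} · e^{3n²/4} = e^{1/12}/A`. -/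
def IsGlaisher (A : ℝ) : Prop :=
  Filter.Tendsto (fun n : ℕ =>
      (∏ i ∈ Finset.range n, (Nat.factorial i : ℝ)) *
        (n : ℝ) ^ (-(n : ℝ) ^ 2 / 2 + 1 / 12) * (2 * Real.pi) ^ (-(n : ℝ) / 2) *
        Real.exp (3 * (n : ℝ) ^ 2 / 4))
    Filter.atTop (nhds (Real.exp (1 / 12) / A))

end Dimer

/-!
Writing `G n` for the normalised superfactorial in `IsGlaisher`, the values of `Γ` at integers and
half-integers turn `U(2i)` into a ratio of factorials, and the product telescopes into
`√d · ∏_{i=2}^d U(2i) = 4 / (2^{1/6} π²) · G(2d)² / G(d)⁸`, so the limit is read off from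
`G n → e^{1/12}/A`.

Since `x / 0 = 0`, `IsGlaisher 0` would say `G n → 0`; this is excluded by a Stirling estimate
with error term, `log n! ≥ log (√(2πn) (n/e)ⁿ) + 1/(12(n+1))`, which gives
`log G (n+1) - log G n ≥ -2/(n(n-1))`, so `G` is bounded below by a positive constant.
-/

open scoped Nat Topology

namespace Nat

theorem superFactorial_pos (n : ℕ) : 0 < n.superFactorial := by
  rw [← prod_range_succ_factorial]
  exact prod_pos fun i _ => factorial_pos i

end Nat

namespace Real

theorem Gamma_nat_add_half_eq_factorial (n : ℕ) :
    Gamma (n + 1 / 2) = (2 * n)! * √π / (4 ^ n * n !) := by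
  induction n with
  | zero => simp [-one_div, Gamma_one_half_eq]
  | succ n ih =>
    rw [Nat.cast_succ, add_right_comm, Gamma_add_one (by positivity), ih, Nat.mul_succ]
    simp only [Nat.factorial_succ]
    push_cast
    field_simp
    ring

theorem log_one_add_le {y : ℝ} (h0 : 0 ≤ y) (h1 : y < 1) :
    log (1 + y) ≤ y - y ^ 2 / 2 + y ^ 3 / 3 + y ^ 4 / (1 - y) := by
  have h := abs_log_sub_add_sum_range_le (x := -y) (by rwa [abs_neg, abs_of_nonneg h0]) 3
  simp only [Finset.sum_range_succ, Finset.sum_range_zero, abs_neg, abs_of_nonneg h0,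
    sub_neg_eq_add] at h
  norm_num at h
  linarith [(abs_le.mp h).2]

end Real

namespace Stirling

theorem log_sqrt_pi_add_le_log_stirlingSeq {n : ℕ} (hn : n ≠ 0) :
    log √π + 1 / (12 * (n + 1)) ≤ log (stirlingSeq n) := by
  obtain ⟨n, rfl⟩ : ∃ k, n = k + 1 := ⟨n - 1, by omega⟩
  have hanti : Antitone fun k : ℕ => log (stirlingSeq (k + 1)) - 1 / (12 * (k + 2)) := by
    refine antitone_nat_of_succ_le fun k => ?_
    have hfirst : 1 / (3 * (2 * (k : ℝ) + 3) ^ 2) ≤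
        log (stirlingSeq (k + 1)) - log (stirlingSeq (k + 2)) := by
      refine (le_of_eq ?_).trans
        (le_hasSum (log_stirlingSeq_sdiff_hasSum k) 0 fun _ _ => by positivity)
      push_cast
      field_simp
      ring
    have hk : 1 / (12 * ((k : ℝ) + 2)) - 1 / (12 * ((k : ℝ) + 3)) ≤
        1 / (3 * (2 * (k : ℝ) + 3) ^ 2) := by
      rw [div_sub_div _ _ (by positivity) (by positivity),
        div_le_div_iff₀ (by positivity) (by positivity)]
      nlinarith
    show log (stirlingSeq (k + 2)) - 1 / (12 * (((k + 1 : ℕ) : ℝ) + 2)) ≤ _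
    rw [Nat.cast_succ, add_assoc, show (1 : ℝ) + 2 = 3 by norm_num]
    linarith
  have hlim : Tendsto (fun k : ℕ => log (stirlingSeq (k + 1)) - 1 / (12 * (k + 2))) atTop
      (𝓝 (log √π - 0)) :=
    ((continuousAt_log (by positivity)).tendsto.comp
      (tendsto_stirlingSeq_sqrt_pi.comp (tendsto_add_atTop_nat 1))).sub
      (tendsto_const_nhds.div_atTop
        ((tendsto_natCast_atTop_atTop.atTop_add tendsto_const_nhds).const_mul_atTop (by norm_num)))
  have := hanti.le_of_tendsto hlim n
  rw [Nat.cast_succ, add_assoc, one_add_one_eq_two]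
  linarith

end Stirling

namespace Dimer

theorem Uker_two_mul_nat_add_two (n : ℕ) :
    Uker (2 * ((n : ℝ) + 2)) =
      π ^ 2 * ((2 * n + 2)! * (2 * n + 3)! : ℝ) ^ 2 /
        (4 ^ (4 * n + 5) * n ! * (n + 1)! ^ 6 * (n + 2)!) := by
  have e1 : (2 * ((n : ℝ) + 2) - 1) / 2 = ((n + 1 : ℕ) : ℝ) + 1 / 2 := by push_cast; ring
  have e2 : (2 * ((n : ℝ) + 2) + 1) / 2 = ((n + 2 : ℕ) : ℝ) + 1 / 2 := by push_cast; ring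
  have e3 : 2 * ((n : ℝ) + 2) / 2 - 1 = ((n : ℕ) : ℝ) + 1 := by ring
  have e4 : 2 * ((n : ℝ) + 2) / 2 = ((n + 1 : ℕ) : ℝ) + 1 := by push_cast; ring
  have e5 : 2 * ((n : ℝ) + 2) / 2 + 1 = ((n + 2 : ℕ) : ℝ) + 1 := by push_cast; ring
  rw [Uker, e1, e2, e3, e5, e4, Gamma_nat_add_half_eq_factorial,
    Gamma_nat_add_half_eq_factorial, Gamma_nat_eq_factorial, Gamma_nat_eq_factorial,
    Gamma_nat_eq_factorial, show 2 * (n + 1) = 2 * n + 2 by ring,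
    show 2 * (n + 2) = 2 * n + 3 + 1 by ring]
  have hπ : √π ^ 2 = π := sq_sqrt pi_pos.le
  simp only [Nat.factorial_succ (2 * n + 3), Nat.factorial_succ (n + 1)]
  push_cast
  field_simp
  rw [show √π ^ 4 = (√π ^ 2) ^ 2 by ring, hπ]
  ring

theorem prod_Uker_two_mul (m : ℕ) :
    ∏ i ∈ Icc 2 (m + 1), Uker (2 * (i : ℝ)) =
      π ^ (2 * m) * ((2 * m + 1).superFactorial : ℝ) ^ 2 /
        (4 ^ (m * (2 * m + 3)) * (m + 1) * (m.superFactorial : ℝ) ^ 8) := by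
  induction m with
  | zero => simp
  | succ m ih =>
    rw [prod_Icc_succ_top (by omega), ih, show ((m + 1 + 1 : ℕ) : ℝ) = m + 2 by push_cast; ring,
      Uker_two_mul_nat_add_two, show 2 * (m + 1) + 1 = 2 * m + 1 + 1 + 1 by ring,
      show (m + 1) * (2 * (m + 1) + 3) = m * (2 * m + 3) + (4 * m + 5) by ring]
    simp only [Nat.superFactorial_succ, Nat.factorial_succ (m + 1), Nat.factorial_succ m]
    push_cast
    field_simp
    ring

noncomputable def glaisherSeq (n : ℕ) : ℝ :=
  (∏ i ∈ range n, (i ! : ℝ)) * (n : ℝ) ^ (-(n : ℝ) ^ 2 / 2 + 1 / 12) *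
    (2 * π) ^ (-(n : ℝ) / 2) * exp (3 * (n : ℝ) ^ 2 / 4)

theorem isGlaisher_iff {A : ℝ} :
    IsGlaisher A ↔ Tendsto glaisherSeq atTop (𝓝 (exp (1 / 12) / A)) := Iff.rfl

theorem glaisherSeq_succ_pos (n : ℕ) : 0 < glaisherSeq (n + 1) := by
  have := prod_pos fun i (_ : i ∈ range (n + 1)) => (by positivity : (0 : ℝ) < i !)
  unfold glaisherSeq
  positivity

theorem log_glaisherSeq_succ (n : ℕ) :
    log (glaisherSeq (n + 1)) =
      log n.superFactorial + (-((n : ℝ) + 1) ^ 2 / 2 + 1 / 12) * log (n + 1) -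
      ((n : ℝ) + 1) / 2 * (log 2 + log π) + 3 * ((n : ℝ) + 1) ^ 2 / 4 := by
  have : (0 : ℝ) < n.superFactorial := mod_cast n.superFactorial_pos
  rw [glaisherSeq, ← Nat.cast_prod, Nat.prod_range_succ_factorial]
  push_cast
  simp (disch := positivity) only [log_mul, log_rpow, log_exp]
  ring

theorem sqrt_mul_prod_Uker_eq (m : ℕ) :
    √((m : ℝ) + 1) * ∏ i ∈ Icc 2 (m + 1), Uker (2 * (i : ℝ)) =
      4 / (2 ^ (1 / 6 : ℝ) * π ^ 2) * glaisherSeq (2 * m + 1 + 1) ^ 2 /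
        glaisherSeq (m + 1) ^ 8 := by
  have : (0 : ℝ) < m.superFactorial := mod_cast m.superFactorial_pos
  have : (0 : ℝ) < (2 * m + 1).superFactorial := mod_cast (2 * m + 1).superFactorial_pos
  have := glaisherSeq_succ_pos m
  have := glaisherSeq_succ_pos (2 * m + 1)
  rw [prod_Uker_two_mul]
  refine log_injOn_pos (by simp only [Set.mem_Ioi]; positivity)
    (by simp only [Set.mem_Ioi]; positivity) ?_
  simp (disch := positivity) only [log_mul, log_div, log_pow, log_rpow, log_sqrt,
    log_glaisherSeq_succ]
  have h2m : ((2 * m + 1 : ℕ) : ℝ) + 1 = 2 * ((m : ℝ) + 1) := by push_cast; ring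
  rw [h2m, log_mul two_ne_zero (by positivity), show (4 : ℝ) = 2 ^ 2 by norm_num, log_pow]
  push_cast
  ring

theorem log_glaisherSeq_succ_sub {n : ℕ} (hn : n ≠ 0) :
    log (glaisherSeq (n + 1)) - log (glaisherSeq n) =
      (log (Stirling.stirlingSeq n) - log √π) -
        (((n : ℝ) + 1) ^ 2 / 2 - 1 / 12) * log (1 + 1 / (n : ℝ)) + (n : ℝ) / 2 + 3 / 4 := by
  obtain ⟨k, rfl⟩ : ∃ k, n = k + 1 := ⟨n - 1, by omega⟩
  have hlog : log (1 + 1 / ((k : ℝ) + 1)) = log ((k : ℝ) + 2) - log ((k : ℝ) + 1) := by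
    rw [← log_div (by positivity) (by positivity)]
    congr 1
    field_simp
    ring
  rw [log_glaisherSeq_succ, log_glaisherSeq_succ, Nat.superFactorial_succ,
    Stirling.log_stirlingSeq_formula, log_sqrt pi_pos.le]
  push_cast
  rw [hlog, show (k : ℝ) + 1 + 1 = k + 2 by ring,
    log_mul (by positivity) (Nat.cast_pos.2 k.superFactorial_pos).ne',
    log_mul two_ne_zero (by positivity),
    log_div (by positivity) (exp_pos 1).ne', log_exp]
  ring

theorem neg_two_div_le_log_glaisherSeq_succ_sub {n : ℕ} (hn : 2 ≤ n) :
    -(2 / (((n : ℝ) - 1) * n)) ≤ log (glaisherSeq (n + 1)) - log (glaisherSeq n) := by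
  have hx : (2 : ℝ) ≤ n := by exact_mod_cast hn
  have hθ := Stirling.log_sqrt_pi_add_le_log_stirlingSeq (n := n) (by omega)
  have hlog := log_one_add_le (y := 1 / (n : ℝ)) (by positivity)
    ((div_lt_one (by positivity)).2 (by linarith))
  have hC : (0 : ℝ) ≤ ((n : ℝ) + 1) ^ 2 / 2 - 1 / 12 := by nlinarith
  have hrat : (((n : ℝ) + 1) ^ 2 / 2 - 1 / 12) *
      (1 / (n : ℝ) - (1 / (n : ℝ)) ^ 2 / 2 + (1 / (n : ℝ)) ^ 3 / 3 +
        (1 / (n : ℝ)) ^ 4 / (1 - 1 / (n : ℝ))) ≤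
      1 / (12 * ((n : ℝ) + 1)) + (n : ℝ) / 2 + 3 / 4 + 2 / (((n : ℝ) - 1) * n) := by
    rw [← sub_nonneg]
    have hx1 : (0 : ℝ) < n - 1 := by linarith
    have e : 1 / (12 * ((n : ℝ) + 1)) + (n : ℝ) / 2 + 3 / 4 + 2 / (((n : ℝ) - 1) * n) -
        (((n : ℝ) + 1) ^ 2 / 2 - 1 / 12) *
          (1 / (n : ℝ) - (1 / (n : ℝ)) ^ 2 / 2 + (1 / (n : ℝ)) ^ 3 / 3 +
            (1 / (n : ℝ)) ^ 4 / (1 - 1 / (n : ℝ))) =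
        (93 * (n : ℝ) ^ 3 + 32 * (n : ℝ) ^ 2 - 93 * n - 20) /
          (72 * (n : ℝ) ^ 3 * ((n : ℝ) - 1) * ((n : ℝ) + 1)) := by
      field_simp
      ring
    rw [e]
    apply div_nonneg <;> [nlinarith; positivity]
  rw [log_glaisherSeq_succ_sub (by omega)]
  linarith [mul_le_mul_of_nonneg_left hlog hC]

theorem exists_pos_le_glaisherSeq : ∃ c > 0, ∀ n, c ≤ glaisherSeq (n + 2) := by
  have hmono : Monotone fun k : ℕ => log (glaisherSeq (k + 2)) - 2 / ((k : ℝ) + 1) := by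
    refine monotone_nat_of_le_succ fun k => ?_
    have hstep := neg_two_div_le_log_glaisherSeq_succ_sub (n := k + 2) (by omega)
    have e : 2 / ((k : ℝ) + 1) - 2 / ((k : ℝ) + 2) =
        2 / (((k : ℝ) + 1) * ((k : ℝ) + 2)) := by
      field_simp
      ring
    rw [show k + 1 + 2 = k + 2 + 1 by ring]
    push_cast at hstep ⊢
    rw [show (k : ℝ) + 2 - 1 = k + 1 by ring] at hstep
    rw [show (k : ℝ) + 1 + 1 = k + 2 by ring]
    linarith
  refine ⟨exp (log (glaisherSeq 2) - 2), exp_pos _, fun n => ?_⟩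
  calc exp (log (glaisherSeq 2) - 2) ≤ exp (log (glaisherSeq (n + 2))) := by
        have := hmono (Nat.zero_le n)
        gcongr
        have : 0 ≤ 2 / ((n : ℝ) + 1) := by positivity
        linarith
    _ = glaisherSeq (n + 2) := exp_log (glaisherSeq_succ_pos (n + 1))

theorem IsGlaisher.ne_zero {A : ℝ} (hA : IsGlaisher A) : A ≠ 0 := by
  rintro rfl
  obtain ⟨c, hc, hle⟩ := exists_pos_le_glaisherSeq
  rw [isGlaisher_iff, div_zero] at hA
  have hlim := hA.comp (tendsto_add_atTop_nat 2)
  obtain ⟨n, hn⟩ := (hlim.eventually_lt_const hc).exists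
  exact (hle n).not_gt hn

end Dimer

open Dimer Filter Finset Real in
/-- Proposition 7.1, eq. (7.4): `∏_{i=2}^d U(2i) ∼ C′_e/√d` as
`d → ∞`, with `C′_e = C_e = 4/(πC)` and `C = 2^{1/6} e^{1/2} π / A⁶`. -/
theorem statement_17 (A : ℝ) (hA : IsGlaisher A) :
    Filter.Tendsto
      (fun d : ℕ => Real.sqrt d * ∏ i ∈ Finset.Icc 2 d, Uker (2 * (i : ℝ)))
      Filter.atTop
      (nhds (4 / (Real.pi * ((2 : ℝ) ^ ((1 : ℝ) / 6) * Real.exp (1 / 2) * Real.pi / A ^ 6)))) := by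
  have hA0 := hA.ne_zero
  have hL : exp (1 / 12) / A ≠ 0 := div_ne_zero (exp_pos _).ne' hA0
  have hdouble : Tendsto (fun m : ℕ => 2 * m + 1 + 1) atTop atTop :=
    tendsto_atTop_mono (fun m => by simp only [id]; omega) tendsto_id
  rw [isGlaisher_iff] at hA
  have hlim := ((hA.comp hdouble).pow 2
    |>.const_mul (4 / (2 ^ (1 / 6 : ℝ) * π ^ 2))).div
    ((hA.comp (tendsto_add_atTop_nat 1)).pow 8) (pow_ne_zero 8 hL)
  have hval : 4 / (2 ^ (1 / 6 : ℝ) * π ^ 2) * (exp (1 / 12) / A) ^ 2 / (exp (1 / 12) / A) ^ 8 =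
      4 / (π * (2 ^ (1 / 6 : ℝ) * exp (1 / 2) * π / A ^ 6)) := by
    rw [show exp (1 / 2) = exp (1 / 12) ^ 6 by rw [← exp_nat_mul]; norm_num]
    field_simp
  rw [← tendsto_add_atTop_iff_nat 1, ← hval]
  simp only [Nat.cast_succ, sqrt_mul_prod_Uker_eq]
  exact hlim
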